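/- Let G be a finite group, O a transfer system on G, and M the maximal compatible transfer system of O. If K → H ∈ O and every proper subgroup J < H satisfies J ≤ K (equivalently, every proper restriction of K → H is reflexive), then K → H ∈ M. -/

import Mathlib

/-- A transfer system on a group `G`: a binary relation on subgroups refining
inclusion, which is reflexive, closed under conjugation, restriction, and
composition. -/
structure TransferSystem (G : Type*) [Group G] where
  rel : Subgroup G → Subgroup G → Prop
  le_of_rel : ∀ {K H : Subgroup G}, rel K H → K ≤ H
  refl : ∀ H : Subgroup G, rel H H
  conj : ∀ {K H : Subgroup G} (g : G), rel K H →
    rel (K.map (MulAut.conj g).toMonoidHom) (H.map (MulAut.conj g).toMonoidHom)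
  restrict : ∀ {K H : Subgroup G} (L : Subgroup G), rel K H → L ≤ H → rel (K ⊓ L) L
  comp : ∀ {L K H : Subgroup G}, rel L K → rel K H → rel L H

/-- The pair `(Oa, Om)` of transfer systems is compatible. -/
def TransferSystem.Compatible {G : Type*} [Group G] (Oa Om : TransferSystem G) : Prop :=
  (∀ K H : Subgroup G, Om.rel K H → Oa.rel K H) ∧
  ∀ K J H : Subgroup G, J ≤ H → Om.rel K H → Oa.rel (K ⊓ J) K → Oa.rel J H

/-- `M` is the maximal compatible transfer system of `O`. -/
def TransferSystem.IsMaxCompatible {G : Type*} [Group G] (O M : TransferSystem G) : Prop :=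
  O.Compatible M ∧
  ∀ Om : TransferSystem G, O.Compatible Om → ∀ K H : Subgroup G, Om.rel K H → M.rel K H

/-- `T` is the transfer system generated by the binary relation `B`, i.e. the
smallest transfer system containing `B`. -/
def TransferSystem.IsGeneratedBy {G : Type*} [Group G] (T : TransferSystem G)
    (B : Subgroup G → Subgroup G → Prop) : Prop :=
  (∀ K H : Subgroup G, B K H → T.rel K H) ∧
  ∀ T' : TransferSystem G, (∀ K H : Subgroup G, B K H → T'.rel K H) →
    ∀ K H : Subgroup G, T.rel K H → T'.rel K H

/-- The single transfer `K → H` is compatible with `Oa`. -/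
def TransferSystem.EdgeCompatible {G : Type*} [Group G] (Oa : TransferSystem G)
    (K H : Subgroup G) : Prop :=
  ∀ J : Subgroup G, J ≤ H → Oa.rel (K ⊓ J) K → Oa.rel J H

/-- A transfer system is saturated. -/
def TransferSystem.Saturated {G : Type*} [Group G] (O : TransferSystem G) : Prop :=
  ∀ L K H : Subgroup G, L ≤ K → K ≤ H → O.rel L H → O.rel K H

/-- A transfer system is disklike: every transfer is a restriction of a
transfer to the full group. -/
def TransferSystem.Disklike {G : Type*} [Group G] (O : TransferSystem G) : Prop :=
  ∀ K H : Subgroup G, O.rel K H → ∃ L : Subgroup G, O.rel L ⊤ ∧ K = L ⊓ H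

/-- `r` is a proper restriction of `e` in the restriction order on transfers,
viewed as pairs of subgroups. -/
def RestrLt {G : Type*} [Group G] (r e : Subgroup G × Subgroup G) : Prop :=
  ∃ I : Subgroup G, I < e.2 ∧ r = (e.1 ⊓ I, I)

/-- `r ≺ e`: `r` is covered by `e` in the restriction order on transfers of `O`. -/
def RestrCovBy {G : Type*} [Group G] (O : TransferSystem G)
    (r e : Subgroup G × Subgroup G) : Prop :=
  RestrLt r e ∧
    ¬ ∃ q : Subgroup G × Subgroup G, O.rel q.1 q.2 ∧ RestrLt r q ∧ RestrLt q e

/-- The binary relation `p⁻¹O` on subgroups of `G`, for `O` a transfer system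
on `G ⧸ N`. -/
def preimageRel {G : Type*} [Group G] (N : Subgroup G) [N.Normal]
    (O : TransferSystem (G ⧸ N)) : Subgroup G → Subgroup G → Prop :=
  fun A B => ∃ K H : Subgroup (G ⧸ N), O.rel K H ∧
    A = Subgroup.comap (QuotientGroup.mk' N) K ∧ B = Subgroup.comap (QuotientGroup.mk' N) H

/-!
The transfers of `O` whose proper restrictions are all reflexive are closed under conjugation, and
chains of them form a transfer system: restricting a chain to a proper subgroup of its target
amounts to dropping the last step. Each such transfer `K → H` is compatible with `O` (the
restriction of `K → H` to `J < H` is `J → K`, which composes with `K → H`), and compatibility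
survives composition, so this transfer system is compatible with `O` and hence lies in the
maximal compatible one.
-/

namespace TransferSystem

variable {G : Type*} [Group G] (O : TransferSystem G)

instance : Std.Refl O.rel := ⟨O.refl⟩

instance : IsTrans (Subgroup G) O.rel := ⟨fun _ _ _ => O.comp⟩

/-- The restrictions `K ⊓ J → J` of `K → H` to proper subgroups `J < H` are all reflexive. -/
def BasicRel (K H : Subgroup G) : Prop :=
  O.rel K H ∧ ∀ J : Subgroup G, J < H → J ≤ K

variable {O}

theorem BasicRel.le {K H : Subgroup G} (h : O.BasicRel K H) : K ≤ H :=
  O.le_of_rel h.1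

theorem BasicRel.conj {K H : Subgroup G} (h : O.BasicRel K H) (g : G) :
    O.BasicRel (K.map (MulAut.conj g).toMonoidHom) (H.map (MulAut.conj g).toMonoidHom) := by
  refine ⟨O.conj g h.1, fun J hJ => ?_⟩
  let e := (MulAut.conj g).mapSubgroup
  exact e.symm_apply_le.mp (h.2 _ (e.symm_apply_lt.mpr hJ))

theorem edgeCompatible_refl (A : Subgroup G) : O.EdgeCompatible A A := by
  intro J hJ hrel
  rwa [inf_of_le_right hJ] at hrel

theorem EdgeCompatible.trans {A B C : Subgroup G} (hAB : A ≤ B) (h₁ : O.EdgeCompatible A B)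
    (h₂ : O.EdgeCompatible B C) : O.EdgeCompatible A C := by
  intro J hJ hrel
  refine h₂ J hJ (h₁ (B ⊓ J) inf_le_left ?_)
  rwa [← inf_assoc, inf_of_le_left hAB]

theorem BasicRel.edgeCompatible {K H : Subgroup G} (h : O.BasicRel K H) :
    O.EdgeCompatible K H := by
  intro J hJ hrel
  rcases hJ.lt_or_eq with hlt | rfl
  · rw [inf_of_le_right (h.2 J hlt)] at hrel
    exact O.comp hrel h.1
  · exact O.refl J

theorem le_of_reflTransGen_basicRel {A B : Subgroup G}
    (hAB : Relation.ReflTransGen O.BasicRel A B) : A ≤ B :=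
  Relation.reflTransGen_le_of_le (fun _ _ h => h.le) A B hAB

theorem rel_of_reflTransGen_basicRel {A B : Subgroup G}
    (hAB : Relation.ReflTransGen O.BasicRel A B) : O.rel A B :=
  Relation.reflTransGen_le_of_le (fun _ _ h => h.1) A B hAB

theorem edgeCompatible_of_reflTransGen_basicRel {A B : Subgroup G}
    (hAB : Relation.ReflTransGen O.BasicRel A B) : O.EdgeCompatible A B := by
  induction hAB with
  | refl => exact edgeCompatible_refl A
  | tail hAB' hE ih => exact ih.trans (le_of_reflTransGen_basicRel hAB') hE.edgeCompatible

theorem reflTransGen_basicRel_restrict {A B : Subgroup G} (L : Subgroup G)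
    (hAB : Relation.ReflTransGen O.BasicRel A B) (hL : L ≤ B) :
    Relation.ReflTransGen O.BasicRel (A ⊓ L) L := by
  induction hAB with
  | refl => rw [inf_of_le_right hL]
  | tail hAB' hE ih =>
    rcases hL.lt_or_eq with hlt | rfl
    · exact ih (hE.2 L hlt)
    · rw [inf_of_le_left (le_of_reflTransGen_basicRel (hAB'.tail hE))]
      exact hAB'.tail hE

variable (O)

def basicClosure : TransferSystem G where
  rel := Relation.ReflTransGen O.BasicRel
  le_of_rel := le_of_reflTransGen_basicRel
  refl _ := Relation.ReflTransGen.refl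
  conj g := Relation.ReflTransGen.lift _ (fun _ _ h => h.conj g) _ _
  restrict := reflTransGen_basicRel_restrict
  comp := Relation.ReflTransGen.trans

theorem compatible_basicClosure : O.Compatible O.basicClosure :=
  ⟨fun _ _ => rel_of_reflTransGen_basicRel,
    fun _ J _ hJ hAB => edgeCompatible_of_reflTransGen_basicRel hAB J hJ⟩

end TransferSystem

theorem stmt_5_general {G : Type*} [Group G] (O M : TransferSystem G)
    (hM : O.IsMaxCompatible M) (K H : Subgroup G) (hKH : O.rel K H)
    (h : ∀ J : Subgroup G, J < H → J ≤ K) :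
    M.rel K H :=
  hM.2 O.basicClosure O.compatible_basicClosure K H (Relation.ReflTransGen.single ⟨hKH, h⟩)

/-- if `K → H ∈ O` and every proper subgroup `J < H` satisfies
`J ≤ K`, then `K → H` is in the maximal compatible transfer system `M` of `O`. -/
theorem stmt_5 {G : Type*} [Group G] [Finite G] (O M : TransferSystem G)
    (hM : O.IsMaxCompatible M) (K H : Subgroup G) (hKH : O.rel K H)
    (h : ∀ J : Subgroup G, J < H → J ≤ K) :
    M.rel K H :=
  stmt_5_general O M hM K H hKH h
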